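/- Let S_FF ⊆ S be the set of sorts having only finitely many finite trees, and let S_0F be the set of sorts with no finite trees. For each sort s, let F_s^{infin} = { f : s₁ × ⋯ × sₙ → s ∈ F_s | some sᵢ ∈ S_0F } (the generators of s that build only infinite trees). Define f : P(S) → P(S) by f(X) = X ∪ S_0F ∪ { s ∈ S | F_s \ F_s^{infin} is finite and every generator g : s₁ × ⋯ × sₙ → s in F_s \ F_s^{infin} satisfies sᵢ ∈ X for all i }. Then f is monotone and S_FF is the least fixed point of f; moreover S_FF = ⋃_{d ∈ ℕ} f^{d+1}(∅). -/

import Mathlib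

set_option linter.unusedVariables false


/-- A many-sorted signature: sorts and generators (function symbols),
each generator `g` having argument sorts `src g` and target sort `tgt g`. -/
structure Sig where
  Srt : Type
  Gen : Type
  tgt : Gen → Srt
  src : Gen → List Srt

namespace Sig

variable (σ : Sig)

/-- The generators of a sort `s`. -/
def Gens (s : σ.Srt) : Set σ.Gen := { g | σ.tgt g = s }

/-- A labeling of positions (lists of natural numbers) by generators is a valid
tree labeling if children exist exactly according to arity and have the right sorts. -/
def IsLabeling (L : List ℕ → Option σ.Gen) : Prop :=
  (∀ p, L p = none → ∀ i, L (p ++ [i]) = none) ∧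
  (∀ p g, L p = some g → ∀ i, ((L (p ++ [i])).isSome ↔ i < (σ.src g).length)) ∧
  (∀ p g i g', L p = some g → L (p ++ [i]) = some g' →
      (σ.src g)[i]? = some (σ.tgt g'))

/-- A (possibly infinite) tree of sort `s`. -/
structure Tree (s : σ.Srt) where
  L : List ℕ → Option σ.Gen
  isLab : σ.IsLabeling L
  root : ∃ g, L [] = some g ∧ σ.tgt g = s

variable {σ}

/-- A tree is finite if it has finitely many nodes. -/
def Tree.IsFinite {s : σ.Srt} (t : σ.Tree s) : Prop :=
  { p : List ℕ | (t.L p).isSome }.Finite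

/-- The tree has depth at most `d`. -/
def Tree.DepthLE {s : σ.Srt} (t : σ.Tree s) (d : ℕ) : Prop :=
  ∀ p, (t.L p).isSome → p.length ≤ d

variable (σ)

/-- Build a tree with root labeled `g` from given immediate subtrees. -/
def build (g : σ.Gen) (c : ∀ i : Fin (σ.src g).length, σ.Tree ((σ.src g).get i)) :
    σ.Tree (σ.tgt g) where
  L := fun p =>
    match p with
    | [] => some g
    | i :: q => if h : i < (σ.src g).length then (c ⟨i, h⟩).L q else none
  isLab := by
    refine ⟨?_, ?_, ?_⟩
    · intro p hp i
      match p with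
      | [] => simp at hp
      | j :: q =>
        simp only [List.cons_append]
        by_cases h : j < (σ.src g).length
        · simp only [dif_pos h] at hp ⊢
          exact (c ⟨j, h⟩).isLab.1 q hp i
        · simp only [dif_neg h]
    · intro p g' hp i
      match p with
      | [] =>
        injection hp with hg
        subst hg
        by_cases h : i < (σ.src g).length
        · simp only [List.nil_append, dif_pos h]
          obtain ⟨g₀, h₀, -⟩ := (c ⟨i, h⟩).root
          simp [h₀, h]
        · simp [List.nil_append, dif_neg h, h]
      | j :: q =>
        by_cases h : j < (σ.src g).length
        · simp only [dif_pos h] at hp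
          simp only [List.cons_append, dif_pos h]
          exact (c ⟨j, h⟩).isLab.2.1 q g' hp i
        · simp only [dif_neg h] at hp
          cases hp
    · intro p g' i g'' hp hpi
      match p with
      | [] =>
        injection hp with hg
        subst hg
        by_cases h : i < (σ.src g).length
        · simp only [List.nil_append, dif_pos h] at hpi
          obtain ⟨g₀, h₀, htgt⟩ := (c ⟨i, h⟩).root
          rw [h₀, Option.some.injEq] at hpi
          subst hpi
          rw [List.getElem?_eq_getElem h]
          exact congrArg some htgt.symm
        · simp only [List.nil_append, dif_neg h] at hpi
          cases hpi
      | j :: q =>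
        by_cases h : j < (σ.src g).length
        · simp only [dif_pos h] at hp
          simp only [List.cons_append, dif_pos h] at hpi
          exact (c ⟨j, h⟩).isLab.2.2 q g' i g'' hp hpi
        · simp only [dif_neg h] at hp
          cases hp
  root := ⟨g, rfl, rfl⟩

/-- Sorts with no infinite trees. -/
def S0I : Set σ.Srt := { s | ∀ t : σ.Tree s, t.IsFinite }
/-- Sorts with no finite trees. -/
def S0F : Set σ.Srt := { s | ∀ t : σ.Tree s, ¬ t.IsFinite }
/-- Sorts with only finitely many finite trees. -/
def SFF : Set σ.Srt := { s | { t : σ.Tree s | t.IsFinite }.Finite }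
/-- Sorts with only finitely many infinite trees. -/
def SFI : Set σ.Srt := { s | { t : σ.Tree s | ¬ t.IsFinite }.Finite }
/-- Sorts with exactly one infinite tree. -/
def S1I : Set σ.Srt := { s | ∃! t : σ.Tree s, ¬ t.IsFinite }

/-- Terms of the (extended) first-order language of trees. Variables are
pairs of a sort and a number. -/
inductive Tm : σ.Srt → Type
  | var (s : σ.Srt) (n : ℕ) : Tm s
  | app (g : σ.Gen) (args : ∀ i : Fin (σ.src g).length, Tm ((σ.src g).get i)) :
      Tm (σ.tgt g)

/-- Valuations assign trees to (sorted) variables. -/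
def Val := ∀ s : σ.Srt, ℕ → σ.Tree s

variable {σ}

/-- Evaluation of a term in the structure of trees under a valuation. -/
def Tm.eval (ρ : σ.Val) : ∀ {s : σ.Srt}, σ.Tm s → σ.Tree s
  | _, .var s n => ρ s n
  | _, .app g args => σ.build g (fun i => (args i).eval ρ)

/-- The (sorted) free variables of a term. -/
def Tm.fv : ∀ {s : σ.Srt}, σ.Tm s → Set ((s : σ.Srt) × ℕ)
  | _, .var s n => {⟨s, n⟩}
  | _, .app _ args => ⋃ i, (args i).fv

/-- A term is flat if it is a variable or a generator applied to variables. -/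
def Tm.IsFlat : ∀ {s : σ.Srt}, σ.Tm s → Prop
  | _, .var _ _ => True
  | _, .app g args => ∀ i : Fin (σ.src g).length, ∃ n, args i = Tm.var ((σ.src g).get i) n

/-- A term of the form `f(z̄)`. -/
def Tm.IsApp : ∀ {s : σ.Srt}, σ.Tm s → Prop
  | _, .var _ _ => False
  | _, .app _ _ => True

open Classical in
/-- Update a valuation at one sorted variable. -/
noncomputable def updV (ρ : σ.Val) (s : σ.Srt) (n : ℕ) (t : σ.Tree s) : σ.Val :=
  fun s' m =>
    if h : s' = s then
      (if m = n then cast (congrArg σ.Tree h.symm) t else ρ s' m)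
    else ρ s' m

variable (σ)

/-- Formulae of the extended first-order language of trees: equality,
the finiteness predicates `fin`, propositional connectives and sorted quantifiers. -/
inductive Fml : Type
  | tru : Fml
  | fls : Fml
  | eq {s : σ.Srt} (a b : σ.Tm s) : Fml
  | fin {s : σ.Srt} (a : σ.Tm s) : Fml
  | not (φ : Fml) : Fml
  | and (φ ψ : Fml) : Fml
  | or (φ ψ : Fml) : Fml
  | imp (φ ψ : Fml) : Fml
  | ex (s : σ.Srt) (n : ℕ) (φ : Fml) : Fml
  | all (s : σ.Srt) (n : ℕ) (φ : Fml) : Fml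

variable {σ}

/-- Satisfaction of a formula in the structure `𝒯` of trees under a valuation. -/
def Fml.Sat (ρ : σ.Val) : σ.Fml → Prop
  | .tru => True
  | .fls => False
  | .eq a b => a.eval ρ = b.eval ρ
  | .fin a => (a.eval ρ).IsFinite
  | .not φ => ¬ φ.Sat ρ
  | .and φ ψ => φ.Sat ρ ∧ ψ.Sat ρ
  | .or φ ψ => φ.Sat ρ ∨ ψ.Sat ρ
  | .imp φ ψ => φ.Sat ρ → ψ.Sat ρ
  | .ex s n φ => ∃ t : σ.Tree s, φ.Sat (updV ρ s n t)
  | .all s n φ => ∀ t : σ.Tree s, φ.Sat (updV ρ s n t)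

/-- The free variables of a formula. -/
def Fml.fv : σ.Fml → Set ((s : σ.Srt) × ℕ)
  | .tru => ∅
  | .fls => ∅
  | .eq a b => a.fv ∪ b.fv
  | .fin a => a.fv
  | .not φ => φ.fv
  | .and φ ψ => φ.fv ∪ ψ.fv
  | .or φ ψ => φ.fv ∪ ψ.fv
  | .imp φ ψ => φ.fv ∪ ψ.fv
  | .ex s n φ => φ.fv \ {⟨s, n⟩}
  | .all s n φ => φ.fv \ {⟨s, n⟩}

/-- Two formulae are equivalent in the extended theory of trees if they are
satisfied by exactly the same valuations. -/
def FmlEquiv (φ ψ : σ.Fml) : Prop := ∀ ρ : σ.Val, φ.Sat ρ ↔ ψ.Sat ρ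

end Sig

/-- The generators of sort `s` that build only infinite trees (some argument sort
has no finite trees). -/
def FinfinF (σ : Sig) (s : σ.Srt) : Set σ.Gen :=
  { g | g ∈ σ.Gens s ∧ ∃ s' ∈ σ.src g, s' ∈ Sig.S0F σ }

/-- The operator `f` whose least fixed point is the set of sorts with only
finitely many finite trees. -/
def fFF (σ : Sig) (X : Set σ.Srt) : Set σ.Srt :=
  X ∪ Sig.S0F σ ∪
    { s | (σ.Gens s \ FinfinF σ s).Finite ∧
      ∀ g ∈ σ.Gens s \ FinfinF σ s, ∀ s' ∈ σ.src g, s' ∈ X }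

/-!
A finite tree of sort `s` is a generator of `F_s \ F_s^∞` applied to finite trees of its argument
sorts, so `S_FF` is closed under the third clause of `f`, and `S_0F ⊆ S_FF` trivially: `S_FF` is a
fixed point. Conversely, if `s ∈ S_FF` then `F_s \ F_s^∞` is finite, each of its generators being
the root of a finite tree, and grafting the finite trees of an argument sort of such a generator
into a fixed finite context shows that this sort lies in `S_FF` as well. The finitely many finite
trees of a sort in `S_FF` have depth at most some `d`, those of its argument sorts depth at most
`d - 1`, and induction on `d` puts the sort into `f^{d+1}(∅)`. Every fixed point of the monotone `f`
contains all `fⁿ(∅)`, so `S_FF` is the least one.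
-/

theorem Monotone.iterate_bot_le_of_map_le {α : Type*} [Preorder α] [OrderBot α] {f : α → α}
    (hf : Monotone f) {x : α} (hx : f x ≤ x) (n : ℕ) : f^[n] ⊥ ≤ x :=
  (hf.iterate n bot_le).trans (hf.antitone_iterate_of_map_le hx n.zero_le)

namespace Sig

variable {σ : Sig}

theorem Tree.ext {s : σ.Srt} {t t' : σ.Tree s} (h : t.L = t'.L) : t = t' := by
  cases t; cases t'; cases h; rfl

theorem Tree.isSome_L_nil {s : σ.Srt} (t : σ.Tree s) : (t.L []).isSome := by
  obtain ⟨g, hg, -⟩ := t.root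
  simp [hg]

theorem IsLabeling.eq_none_append {L : List ℕ → Option σ.Gen} (h : σ.IsLabeling L)
    {p : List ℕ} (hp : L p = none) (q : List ℕ) : L (p ++ q) = none := by
  induction q using List.reverseRecOn with
  | nil => simpa using hp
  | append_singleton q j ih => rw [← List.append_assoc]; exact h.1 _ ih j

def Tree.child {s : σ.Srt} (t : σ.Tree s) {g : σ.Gen} (hg : t.L [] = some g)
    (i : Fin (σ.src g).length) : σ.Tree ((σ.src g).get i) where
  L p := t.L (i.1 :: p)
  isLab := by
    obtain ⟨h1, h2, h3⟩ := t.isLab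
    exact ⟨fun p => h1 (i.1 :: p), fun p => h2 (i.1 :: p), fun p => h3 (i.1 :: p)⟩
  root := by
    obtain ⟨g', hg'⟩ := Option.isSome_iff_exists.mp ((t.isLab.2.1 [] g hg i).mpr i.isLt)
    have htgt := t.isLab.2.2 [] g i g' hg hg'
    rw [List.getElem?_eq_getElem i.isLt, Option.some_inj] at htgt
    exact ⟨g', hg', htgt.symm⟩

theorem Tree.child_isFinite {s : σ.Srt} {t : σ.Tree s} (ht : t.IsFinite) {g : σ.Gen}
    (hg : t.L [] = some g) (i : Fin (σ.src g).length) : (t.child hg i).IsFinite :=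
  ht.preimage List.cons_injective.injOn

theorem Tree.ext_child {s : σ.Srt} {t t' : σ.Tree s} {g : σ.Gen}
    (hg : t.L [] = some g) (hg' : t'.L [] = some g) (h : ∀ i, t.child hg i = t'.child hg' i) :
    t = t' := by
  refine Tree.ext (funext fun p => ?_)
  match p with
  | [] => rw [hg, hg']
  | i :: q =>
    by_cases hi : i < (σ.src g).length
    · exact congrArg (fun u => Tree.L u q) (h ⟨i, hi⟩)
    · have hnone : ∀ u : σ.Tree s, u.L [] = some g → u.L [i] = none := fun u hu =>
        Option.not_isSome_iff_eq_none.mp fun hs => hi ((u.isLab.2.1 [] g hu i).mp hs)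
      exact (t.isLab.eq_none_append (hnone t hg) q).trans
        (t'.isLab.eq_none_append (hnone t' hg') q).symm

theorem build_L_cons (g : σ.Gen) (c : ∀ i : Fin (σ.src g).length, σ.Tree ((σ.src g).get i))
    {i : ℕ} (hi : i < (σ.src g).length) (q : List ℕ) :
    (σ.build g c).L (i :: q) = (c ⟨i, hi⟩).L q :=
  dif_pos hi

theorem build_isFinite {g : σ.Gen} {c : ∀ i : Fin (σ.src g).length, σ.Tree ((σ.src g).get i)}
    (hc : ∀ i, (c i).IsFinite) : (σ.build g c).IsFinite := by
  refine ((Set.finite_iUnion fun i => (hc i).image (List.cons i.1)).insert []).subset ?_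
  rintro (_ | ⟨i, q⟩) hp
  · exact Set.mem_insert _ _
  · by_cases hi : i < (σ.src g).length
    · rw [Set.mem_ofPred_eq, build_L_cons g c hi] at hp
      exact Set.mem_insert_of_mem _ (Set.mem_iUnion.mpr ⟨⟨i, hi⟩, q, hp, rfl⟩)
    · exact absurd hp (by simp [build, hi])

theorem exists_isFinite_of_mem_src {s s' : σ.Srt} {g : σ.Gen}
    (hg : g ∈ σ.Gens s \ FinfinF σ s) (hs' : s' ∈ σ.src g) : ∃ w : σ.Tree s', w.IsFinite :=
  not_not.mp fun h => hg.2 ⟨hg.1, s', hs', fun w hw => h ⟨w, hw⟩⟩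

theorem root_mem_gens_diff {s : σ.Srt} {t : σ.Tree s} (ht : t.IsFinite) {g : σ.Gen}
    (hg : t.L [] = some g) : g ∈ σ.Gens s \ FinfinF σ s := by
  obtain ⟨g', hg', htgt⟩ := t.root
  obtain rfl : g' = g := Option.some_injective _ (hg'.symm.trans hg)
  refine ⟨htgt, fun ⟨_, s', hs', hS0F⟩ => ?_⟩
  obtain ⟨i, rfl⟩ := List.mem_iff_get.mp hs'
  exact hS0F _ (t.child_isFinite ht hg i)

theorem exists_isFinite_L_nil_eq {s : σ.Srt} {g : σ.Gen} (hg : g ∈ σ.Gens s \ FinfinF σ s) :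
    ∃ t : σ.Tree s, t.IsFinite ∧ t.L [] = some g := by
  choose w hw using fun j => exists_isFinite_of_mem_src hg (List.get_mem (σ.src g) j)
  obtain ⟨rfl, -⟩ := hg
  exact ⟨σ.build g w, build_isFinite hw, rfl⟩

/-- Grafting into a context `g(w₀, …, _, …, wₙ₋₁)` of finite trees embeds the finite trees of an
argument sort of `g` into those of its target sort, one level deeper. -/
noncomputable def graft (g : σ.Gen) (w : ∀ j : Fin (σ.src g).length, σ.Tree ((σ.src g).get j))
    (i : Fin (σ.src g).length) (u : σ.Tree ((σ.src g).get i)) : σ.Tree (σ.tgt g) :=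
  σ.build g (Function.update w i u)

theorem graft_L_cons (g : σ.Gen) (w : ∀ j : Fin (σ.src g).length, σ.Tree ((σ.src g).get j))
    (i : Fin (σ.src g).length) (u : σ.Tree ((σ.src g).get i)) (p : List ℕ) :
    (σ.graft g w i u).L (i.1 :: p) = u.L p := by
  rw [graft, build_L_cons g _ i.isLt, Fin.eta, Function.update_self]

theorem graft_injective (g : σ.Gen) (w : ∀ j : Fin (σ.src g).length, σ.Tree ((σ.src g).get j))
    (i : Fin (σ.src g).length) : Function.Injective (σ.graft g w i) := fun u u' h =>
  Tree.ext (funext fun p => by rw [← graft_L_cons g w i u, ← graft_L_cons g w i u', h])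

theorem graft_isFinite {g : σ.Gen} {w : ∀ j : Fin (σ.src g).length, σ.Tree ((σ.src g).get j)}
    (hw : ∀ j, (w j).IsFinite) (i : Fin (σ.src g).length) {u : σ.Tree ((σ.src g).get i)}
    (hu : u.IsFinite) : (σ.graft g w i u).IsFinite :=
  build_isFinite (Function.forall_update_iff _ (p := fun _ v => Tree.IsFinite v) |>.mpr
    ⟨hu, fun j _ => hw j⟩)

theorem mem_SFF_of_forall_src_mem {s : σ.Srt} (hfin : (σ.Gens s \ FinfinF σ s).Finite)
    (hsrc : ∀ g ∈ σ.Gens s \ FinfinF σ s, ∀ s' ∈ σ.src g, s' ∈ σ.SFF) : s ∈ σ.SFF := by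
  have hcover : {t : σ.Tree s | t.IsFinite} ⊆
      ⋃ g ∈ σ.Gens s \ FinfinF σ s, {t : σ.Tree s | t.IsFinite ∧ t.L [] = some g} := by
    intro t ht
    obtain ⟨g, hg, -⟩ := t.root
    exact Set.mem_biUnion (root_mem_gens_diff ht hg) ⟨ht, hg⟩
  refine (hfin.biUnion fun g hg => ?_).subset hcover
  have : ∀ i : Fin (σ.src g).length, Finite {u : σ.Tree ((σ.src g).get i) // u.IsFinite} :=
    fun i => (hsrc g hg _ (List.get_mem _ i)).to_subtype
  rw [← Set.finite_coe_iff]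
  refine Finite.of_injective (β := ∀ i, {u : σ.Tree ((σ.src g).get i) // u.IsFinite})
    (fun t i => ⟨t.1.child t.2.2 i, t.1.child_isFinite t.2.1 t.2.2 i⟩) fun t t' h => ?_
  exact Subtype.ext (Tree.ext_child t.2.2 t'.2.2 fun i => congrArg Subtype.val (congrFun h i))

theorem finite_gens_diff_of_mem_SFF {s : σ.Srt} (hs : s ∈ σ.SFF) :
    (σ.Gens s \ FinfinF σ s).Finite :=
  ((hs.image fun t : σ.Tree s => t.L []).preimage (Option.some_injective _).injOn).subset
    fun _ hg => exists_isFinite_L_nil_eq hg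

theorem mem_SFF_of_mem_src {s s' : σ.Srt} (hs : s ∈ σ.SFF) {g : σ.Gen}
    (hg : g ∈ σ.Gens s \ FinfinF σ s) (hs' : s' ∈ σ.src g) : s' ∈ σ.SFF := by
  choose w hw using fun j => exists_isFinite_of_mem_src hg (List.get_mem (σ.src g) j)
  obtain ⟨i, rfl⟩ := List.mem_iff_get.mp hs'
  obtain ⟨rfl, -⟩ := hg
  exact (hs.preimage (graft_injective g w i).injOn).subset fun u hu => graft_isFinite hw i hu

theorem exists_depthLE_of_mem_SFF {s : σ.Srt} (hs : s ∈ σ.SFF) :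
    ∃ d, ∀ t : σ.Tree s, t.IsFinite → t.DepthLE d := by
  obtain ⟨d, hd⟩ := ((hs.biUnion fun t (ht : t.IsFinite) => ht).image List.length).bddAbove
  exact ⟨d, fun t ht p hp => hd ⟨p, Set.mem_biUnion ht hp, rfl⟩⟩

theorem length_lt_of_mem_src {s s' : σ.Srt} {g : σ.Gen} (hg : g ∈ σ.Gens s \ FinfinF σ s)
    (hs' : s' ∈ σ.src g) {d : ℕ} (hd : ∀ t : σ.Tree s, t.IsFinite → t.DepthLE d)
    {u : σ.Tree s'} (hu : u.IsFinite) {p : List ℕ} (hp : (u.L p).isSome) : p.length < d := by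
  choose w hw using fun j => exists_isFinite_of_mem_src hg (List.get_mem (σ.src g) j)
  obtain ⟨i, rfl⟩ := List.mem_iff_get.mp hs'
  obtain ⟨rfl, -⟩ := hg
  exact hd _ (graft_isFinite hw i hu) (i.1 :: p) (by rwa [graft_L_cons])

end Sig

open Sig

theorem fFF_monotone (σ : Sig) : Monotone (fFF σ) := by
  rintro X Y hXY s ((hX | hS0F) | ⟨hfin, hsrc⟩)
  · exact Or.inl (Or.inl (hXY hX))
  · exact Or.inl (Or.inr hS0F)
  · exact Or.inr ⟨hfin, fun g hg s' hs' => hXY (hsrc g hg s' hs')⟩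

theorem S0F_subset_SFF (σ : Sig) : σ.S0F ⊆ σ.SFF := fun _ hs =>
  Set.finite_empty.subset fun t ht => hs t ht

theorem fFF_SFF (σ : Sig) : fFF σ σ.SFF = σ.SFF := by
  refine Set.Subset.antisymm ?_ fun s hs => Or.inl (Or.inl hs)
  rintro s ((hs | hS0F) | ⟨hfin, hsrc⟩)
  · exact hs
  · exact S0F_subset_SFF σ hS0F
  · exact mem_SFF_of_forall_src_mem hfin hsrc

theorem mem_iterate_fFF_of_depthLE {σ : Sig} :
    ∀ (d : ℕ) {s : σ.Srt}, s ∈ σ.SFF → (∀ t : σ.Tree s, t.IsFinite → t.DepthLE d) →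
      s ∈ (fFF σ)^[d + 1] ∅
  | d, s, hs, hd => by
    rw [Function.iterate_succ_apply']
    refine Or.inr ⟨finite_gens_diff_of_mem_SFF hs, fun g hg s' hs' => ?_⟩
    cases d with
    | zero =>
      obtain ⟨w, hw⟩ := exists_isFinite_of_mem_src hg hs'
      exact absurd (length_lt_of_mem_src hg hs' hd hw w.isSome_L_nil) (Nat.not_lt_zero 0)
    | succ d =>
      exact mem_iterate_fFF_of_depthLE d (mem_SFF_of_mem_src hs hg hs')
        fun u hu p hp => Nat.lt_succ_iff.mp (length_lt_of_mem_src hg hs' hd hu hp)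

theorem SFF_subset_iUnion_iterate_fFF (σ : Sig) : σ.SFF ⊆ ⋃ d : ℕ, (fFF σ)^[d + 1] ∅ := by
  intro s hs
  obtain ⟨d, hd⟩ := exists_depthLE_of_mem_SFF hs
  exact Set.mem_iUnion.mpr ⟨d, mem_iterate_fFF_of_depthLE d hs hd⟩

/-- `S_FF` is the least fixed point of `f`, obtained as the union
of the finite iterations of `f` on `∅`. -/
theorem SFF_lfp (σ : Sig) :
    Monotone (fFF σ) ∧
    fFF σ (Sig.SFF σ) = Sig.SFF σ ∧
    (∀ X : Set σ.Srt, fFF σ X = X → Sig.SFF σ ⊆ X) ∧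
    Sig.SFF σ = ⋃ d : ℕ, (fFF σ)^[d + 1] ∅ := by
  have iterate_subset (X : Set σ.Srt) (hX : fFF σ X = X) : ⋃ d : ℕ, (fFF σ)^[d + 1] ∅ ⊆ X :=
    Set.iUnion_subset fun d => (fFF_monotone σ).iterate_bot_le_of_map_le hX.le (d + 1)
  have hSFF := SFF_subset_iUnion_iterate_fFF σ
  exact ⟨fFF_monotone σ, fFF_SFF σ, fun X hX => hSFF.trans (iterate_subset X hX),
    hSFF.antisymm (iterate_subset _ (fFF_SFF σ))⟩
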